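/- Every single-coalition-first action model is a grand-coalition-first action model: in any single-coalition-first action model, the derived outcome functions satisfy, for every coalition C, every state s, and every σ_C ∈ JA_C, out_C(s, σ_C) = ⋃{ out_AG(s, σ_AG) : σ_AG ∈ JA_AG, σ_C ⊆ σ_AG }, where out_AG is the derived outcome function for the grand coalition AG. -/
import Mathlib


/-- Restriction of a joint action of `C` to a subcoalition `D ⊆ C`. -/
def restr {AG Ac : Type} {C D : Set AG} (h : D ⊆ C) (σ : ↥C → Ac) : ↥D → Ac :=
  fun a => σ ⟨a.1, h a.2⟩

open Classical in
/-- The derived outcome function of a single-coalition-first action model: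
`out_∅(s, ∅) = suc(s)` and, for nonempty `C`,
`out_C(s, σ) = ⋂_{a ∈ C} out_a(s, σ|_a)`. -/
noncomputable def sOut {AG S Ac : Type} (suc : S → Set S)
    (outa : (a : AG) → S → (↥({a} : Set AG) → Ac) → Set S)
    (C : Set AG) (s : S) (σ : ↥C → Ac) : Set S :=
  if C.Nonempty then
    ⋂ a : ↥C, outa a.1 s (restr (Set.singleton_subset_iff.mpr a.2) σ)
  else suc s

/-- A joint action of a singleton coalition is determined by its value at the
unique member. -/
lemma single_eq {AG Ac : Type} {a : AG} (f g : ↥({a} : Set AG) → Ac)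
    (h : f ⟨a, rfl⟩ = g ⟨a, rfl⟩) : f = g := by
  funext x
  have hx : x = ⟨a, rfl⟩ := Subtype.ext x.2
  rw [hx]; exact h

/-- Every single-coalition-first action model is a grand-coalition-first
action model: its derived outcome functions satisfy
`out_C(s, σC) = ⋃ { out_AG(s, σAG) : σAG ∈ JA_AG, σC ⊆ σAG }`. -/
theorem scf_is_gcf
    {AG S Ac : Type} [Fintype AG] [Nonempty AG] [Nonempty S] [Nonempty Ac]
    (suc : S → Set S)
    (outa : (a : AG) → S → (↥({a} : Set AG) → Ac) → Set S)
    (hcover : ∀ (a : AG) (s : S),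
      ⋃₀ {Y : Set S | ∃ σ : ↥({a} : Set AG) → Ac, Y = outa a s σ} = suc s) :
    ∀ (C : Set AG) (s : S) (σ : ↥C → Ac),
      sOut suc outa C s σ =
        {t : S | ∃ τ : ↥(Set.univ : Set AG) → Ac,
          (∀ a : ↥C, τ ⟨a.1, Set.mem_univ a.1⟩ = σ a) ∧
          t ∈ sOut suc outa Set.univ s τ} := by
  classical
  have huniv : (Set.univ : Set AG).Nonempty := ⟨Classical.arbitrary AG, trivial⟩
  have hsub : ∀ (a : AG) (s : S) (σa : ↥({a} : Set AG) → Ac),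
      outa a s σa ⊆ suc s := by
    intro a s σa x hx
    rw [← hcover a s]
    exact ⟨outa a s σa, ⟨σa, rfl⟩, hx⟩
  intro C s σ
  ext t
  simp only [Set.mem_setOf_eq]
  constructor
  · intro ht
    have hts : t ∈ suc s := by
      by_cases hC : C.Nonempty
      · obtain ⟨a, ha⟩ := hC
        rw [sOut, if_pos ⟨a, ha⟩] at ht
        exact hsub a s _ (Set.mem_iInter.mp ht ⟨a, ha⟩)
      · rw [sOut, if_neg hC] at ht; exact ht
    have hch : ∀ a : AG, ∃ σa : ↥({a} : Set AG) → Ac, t ∈ outa a s σa := by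
      intro a
      rw [← hcover a s] at hts
      obtain ⟨Y, ⟨σa, rfl⟩, hY⟩ := hts
      exact ⟨σa, hY⟩
    choose f hf using hch
    refine ⟨fun a => if h : a.1 ∈ C then σ ⟨a.1, h⟩ else f a.1 ⟨a.1, rfl⟩, ?_, ?_⟩
    · intro a
      simp only [a.2, dif_pos]
    · rw [sOut, if_pos huniv]
      refine Set.mem_iInter.mpr fun a => ?_
      by_cases h : a.1 ∈ C
      · have hC : C.Nonempty := ⟨a.1, h⟩
        rw [sOut, if_pos hC] at ht
        have h1 := Set.mem_iInter.mp ht ⟨a.1, h⟩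
        have heq : restr (Set.singleton_subset_iff.mpr (Set.mem_univ a.1))
            (fun b : ↥(Set.univ : Set AG) =>
              if hb : b.1 ∈ C then σ ⟨b.1, hb⟩ else f b.1 ⟨b.1, rfl⟩) =
            restr (Set.singleton_subset_iff.mpr h) σ := by
          apply single_eq
          simp only [restr, h, dif_pos]
        rw [heq]
        exact h1
      · have heq : restr (Set.singleton_subset_iff.mpr (Set.mem_univ a.1))
            (fun b : ↥(Set.univ : Set AG) =>
              if hb : b.1 ∈ C then σ ⟨b.1, hb⟩ else f b.1 ⟨b.1, rfl⟩) = f a.1 := by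
          apply single_eq
          simp only [restr, h, dif_neg, not_false_iff]
        rw [heq]
        exact hf a.1
  · rintro ⟨τ, hτ, htτ⟩
    rw [sOut, if_pos huniv] at htτ
    by_cases hC : C.Nonempty
    · rw [sOut, if_pos hC]
      refine Set.mem_iInter.mpr fun a => ?_
      have h1 := Set.mem_iInter.mp htτ ⟨a.1, trivial⟩
      have heq : restr (Set.singleton_subset_iff.mpr (Set.mem_univ a.1)) τ =
          restr (Set.singleton_subset_iff.mpr a.2) σ := by
        apply single_eq
        simpa [restr] using hτ a
      rw [heq] at h1
      exact h1
    · rw [sOut, if_neg hC]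
      exact hsub _ s _ (Set.mem_iInter.mp htτ ⟨Classical.arbitrary AG, trivial⟩)
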